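/- Let F ⊆ binom(ℕ,d) be a finite compressed family. Then |Inc(F)| = Inc^[d](|F|). Equivalently, if u is the m-th element of binom(ℕ,d) in the squashed order and m has d-binomial representation C(a_d,d)+⋯+C(a_s,s), then the initial segment C(u+1) has cardinality C(a_d+1,d)+⋯+C(a_s+1,s). -/

import Mathlib

/-!
A compressed family is a colex initial segment `C(u)`. Splitting off the largest element gives
`|C(insert M w)| = C(M, |w| + 1) + |C(w)|` for `M` above `w`, and in particular
`|C([r, r + s))| = C(r + s, s)`; so the binomial representation `m = C(a_d, d) + ⋯ + C(a_s, s)`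
pins `u` down as `[a_s - s, a_s) ∪ {a_{s+1}, …, a_d}`. The maps of `Inc_1` carry `C(u)` exactly
onto `C(u + 1)`: `π(w) ≤ w + 1` in colex, and any `v ≤ u + 1` is the image of a set below `u`
under the map skipping the least gap of `v`. Finally `u + 1` is the set attached to the
representation with every `a_i` raised by one, whence `|C(u + 1)| = ∑ C(a_i + 1, i)`.
-/

def Inc1 : Set (ℕ → ℕ) := {π | StrictMono π ∧ ∀ j, π j ≤ j + 1}

def incF (F : Set (Finset ℕ)) : Set (Finset ℕ) :=
  {v | ∃ u ∈ F, ∃ π ∈ Inc1, v = u.image π}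

def compressionIn (A : Set ℕ) (d n : ℕ) : Set (Finset ℕ) :=
  {v | ↑v ⊆ A ∧ v.card = d ∧
    {w : Finset ℕ | ↑w ⊆ A ∧ w.card = d ∧ toColex w ≤ toColex v}.ncard ≤ n}

def IsCompressedIn (A : Set ℕ) (d : ℕ) (F : Set (Finset ℕ)) : Prop :=
  (∀ u ∈ F, ↑u ⊆ A ∧ u.card = d) ∧
  ∀ u ∈ F, ∀ v : Finset ℕ, ↑v ⊆ A → v.card = d → toColex v ≤ toColex u → v ∈ F

def hatL (F : Set (Finset ℕ)) (k : ℕ) : Set (Finset ℕ) :=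
  {u | (∀ x ∈ u, k < x) ∧ insert k u ∈ F}

def hatR (F : Set (Finset ℕ)) (k : ℕ) : Set (Finset ℕ) :=
  {u | (∀ x ∈ u, x < k) ∧ insert k u ∈ F}

def leftComp (d : ℕ) (F : Set (Finset ℕ)) : Set (Finset ℕ) :=
  ⋃ k : ℕ, {v | ∃ w ∈ compressionIn {j | k < j} (d - 1) (hatL F k).ncard, v = insert k w}

def rightComp (d : ℕ) (F : Set (Finset ℕ)) : Set (Finset ℕ) :=
  ⋃ k : ℕ, {v | ∃ w ∈ compressionIn Set.univ (d - 1) (hatR F k).ncard, v = insert k w}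

def BorelLE (u v : Finset ℕ) : Prop :=
  List.Forall₂ (· ≤ ·) (u.sort (· ≤ ·)) (v.sort (· ≤ ·))

def IsShifted (F : Set (Finset ℕ)) : Prop :=
  ∀ u ∈ F, ∀ v, BorelLE v u → v ∈ F

def piShift (i : ℕ) : ℕ → ℕ := fun j => if j < i then j else j + 1

def IsBinRep (d m s : ℕ) (a : ℕ → ℕ) : Prop :=
  1 ≤ s ∧ s ≤ d ∧ (∀ i, s ≤ i → i < d → a i < a (i + 1)) ∧ s ≤ a s ∧
    m = ∑ i ∈ Finset.Icc s d, Nat.choose (a i) i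

def famLE (F G : Set (Finset ℕ)) : Prop :=
  F = G ∨ ∃ m ∈ G, m ∉ F ∧
    ∀ w : Finset ℕ, (w ∈ F ∧ w ∉ G) ∨ (w ∈ G ∧ w ∉ F) → toColex w ≤ toColex m

def IsSimplicialComplex (Δ : Set (Finset ℕ)) : Prop :=
  Δ.Finite ∧ ∀ F ∈ Δ, ∀ G ⊆ F, G ∈ Δ

open Finset

def colexInitSeg (v : Finset ℕ) : Finset (Finset ℕ) :=
  {w ∈ (range (v.sup id + 1)).powersetCard #v | toColex w ≤ toColex v}

lemma mem_colexInitSeg {v w : Finset ℕ} :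
    w ∈ colexInitSeg v ↔ #w = #v ∧ toColex w ≤ toColex v := by
  simp only [colexInitSeg, mem_filter, mem_powersetCard, and_assoc, and_iff_right_iff_imp]
  refine fun ⟨_, hle⟩ b hb ↦ mem_range_succ_iff.2 ?_
  exact Colex.forall_le_mono hle (fun c hc ↦ le_sup (f := id) hc) b hb

lemma self_mem_colexInitSeg (v : Finset ℕ) : v ∈ colexInitSeg v :=
  mem_colexInitSeg.2 ⟨rfl, le_rfl⟩

lemma colexInitSeg_empty : colexInitSeg ∅ = {∅} := by
  ext w
  simp +contextual [mem_colexInitSeg, card_eq_zero]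

lemma toColex_le_insert_iff {M : ℕ} {w t : Finset ℕ} (hM : ∀ x ∈ w, x < M) (ht : M ∈ t) :
    toColex t ≤ toColex (insert M w) ↔ toColex (t.erase M) ≤ toColex w := by
  have hMw : M ∉ w := fun h ↦ (hM M h).false
  rw [← Colex.toColex_sdiff_le_toColex_sdiff (u := {M}) (by simpa) (by simp)]
  simp [sdiff_singleton_eq_erase, erase_insert hMw]

lemma colexInitSeg_insert {M : ℕ} {w : Finset ℕ} (hM : ∀ x ∈ w, x < M) :
    colexInitSeg (insert M w) =
      (range M).powersetCard (#w + 1) ∪ (colexInitSeg w).image (insert M) := by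
  have hMw : M ∉ w := fun h ↦ (hM M h).false
  ext t
  simp only [mem_union, mem_powersetCard, mem_image, mem_colexInitSeg, card_insert_of_notMem hMw]
  by_cases hMt : M ∈ t
  · have hrange : ¬ t ⊆ range M := fun h ↦ by simpa using h hMt
    simp only [hrange, false_and, false_or, toColex_le_insert_iff hM hMt]
    constructor
    · rintro ⟨hcard, hle⟩
      exact ⟨t.erase M, ⟨by rw [card_erase_of_mem hMt, hcard]; rfl, hle⟩, insert_erase hMt⟩
    · rintro ⟨t', ⟨hcard, hle⟩, rfl⟩
      have hMt' : M ∉ t' := fun h ↦ (Colex.forall_lt_mono hle hM M h).false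
      rw [card_insert_of_notMem hMt', erase_insert hMt']
      exact ⟨by rw [hcard], hle⟩
  · have himage : ¬ ∃ t' ∈ colexInitSeg w, insert M t' = t := by
      rintro ⟨t', -, rfl⟩; exact hMt (mem_insert_self M t')
    simp only [mem_colexInitSeg] at himage
    simp only [himage, or_false, and_comm (a := t ⊆ _)]
    refine and_congr_right fun _ ↦ ⟨fun hle ↦ ?_, fun hsub a hat _ ↦ ?_⟩
    · intro x hx
      have := Colex.forall_le_mono (a := M) hle (fun b hb ↦ ?_) x hx
      · exact mem_range.2 (this.lt_of_ne fun h ↦ hMt (h ▸ hx))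
      · rcases mem_insert.1 hb with rfl | hb
        exacts [le_rfl, (hM b hb).le]
    · exact ⟨M, mem_insert_self M w, hMt, (mem_range.1 (hsub hat)).le⟩

lemma card_colexInitSeg_insert {M : ℕ} {w : Finset ℕ} (hM : ∀ x ∈ w, x < M) :
    #(colexInitSeg (insert M w)) = M.choose (#w + 1) + #(colexInitSeg w) := by
  have hdisj : Disjoint ((range M).powersetCard (#w + 1)) ((colexInitSeg w).image (insert M)) :=
    disjoint_left.2 fun t ht ht' ↦ by
      obtain ⟨t', -, rfl⟩ := mem_image.1 ht'
      simpa using (mem_powersetCard.1 ht).1 (mem_insert_self M t')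
  have hinj : Set.InjOn (insert M) (colexInitSeg w : Set (Finset ℕ)) := fun x hx y hy hxy ↦ by
    have hlt {z} (hz : z ∈ colexInitSeg w) : M ∉ z := fun h ↦
      (Colex.forall_lt_mono (mem_colexInitSeg.1 hz).2 hM M h).false
    simpa [erase_insert (hlt hx), erase_insert (hlt hy)] using congrArg (erase · M) hxy
  rw [colexInitSeg_insert hM, card_union_of_disjoint hdisj, card_powersetCard, card_range,
    card_image_of_injOn hinj]

lemma card_colexInitSeg_Ico (r s : ℕ) : #(colexInitSeg (Ico r (r + s))) = (r + s).choose s := by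
  induction s with
  | zero => simp [colexInitSeg_empty]
  | succ s ih =>
    rw [← add_assoc, ← insert_Ico_right_eq_Ico_add_one (Nat.le_add_right r s),
      card_colexInitSeg_insert (fun x hx ↦ (mem_Ico.1 hx).2), ih, Nat.card_Ico,
      Nat.add_sub_cancel_left, Nat.choose_succ_succ' (r + s) s, add_comm]

lemma card_colexInitSeg_lt {u v : Finset ℕ} (hcard : #u = #v) (h : toColex u < toColex v) :
    #(colexInitSeg u) < #(colexInitSeg v) := by
  refine card_lt_card ⟨fun w hw ↦ ?_, fun hsub ↦ ?_⟩
  · obtain ⟨hw, hle⟩ := mem_colexInitSeg.1 hw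
    exact mem_colexInitSeg.2 ⟨hw.trans hcard, hle.trans h.le⟩
  · exact h.not_ge (mem_colexInitSeg.1 (hsub (self_mem_colexInitSeg v))).2

lemma eq_of_card_colexInitSeg_eq {u v : Finset ℕ} (hcard : #u = #v)
    (h : #(colexInitSeg u) = #(colexInitSeg v)) : u = v := by
  rcases lt_trichotomy (toColex u) (toColex v) with huv | huv | hvu
  · exact absurd h (card_colexInitSeg_lt hcard huv).ne
  · exact toColex_inj.1 huv
  · exact absurd h (card_colexInitSeg_lt hcard.symm hvu).ne'

lemma toColex_filter_le_filter {s t : Finset ℕ} (k : ℕ) (h : toColex s ≤ toColex t) :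
    toColex {x ∈ s | k ≤ x} ≤ toColex {x ∈ t | k ≤ x} := by
  rw [Colex.toColex_le_toColex] at h ⊢
  intro a has hat
  simp only [mem_filter] at has hat
  obtain ⟨b, hbt, hbs, hab⟩ := h has.1 fun h ↦ hat ⟨h, has.2⟩
  exact ⟨b, mem_filter.2 ⟨hbt, has.2.trans hab⟩, fun h ↦ hbs (mem_filter.1 h).1, hab⟩

lemma toColex_le_of_filter_le {s t : Finset ℕ} {k : ℕ} (hcard : #s = #t)
    (hlow : {x ∈ t | x < k} ⊆ {x ∈ s | x < k})
    (hhigh : toColex {x ∈ s | k ≤ x} ≤ toColex {x ∈ t | k ≤ x}) :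
    toColex s ≤ toColex t := by
  rw [Colex.toColex_le_toColex] at hhigh ⊢
  intro a has hat
  by_cases hka : k ≤ a
  · obtain ⟨b, hbt, hbs, hab⟩ := hhigh (mem_filter.2 ⟨has, hka⟩) fun h ↦ hat (mem_filter.1 h).1
    exact ⟨b, (mem_filter.1 hbt).1, fun h ↦ hbs (mem_filter.2 ⟨h, hka.trans hab⟩), hab⟩
  · have hlt : #{x ∈ t | x < k} < #{x ∈ s | x < k} :=
      card_lt_card ⟨hlow, fun h ↦ hat (mem_filter.1 (h (mem_filter.2 ⟨has, not_le.1 hka⟩))).1⟩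
    have hs := card_filter_add_card_filter_not (s := s) (· < k)
    have ht := card_filter_add_card_filter_not (s := t) (· < k)
    obtain ⟨b, hbt, hbs⟩ := exists_mem_notMem_of_card_lt_card
      (s := {x ∈ s | ¬ x < k}) (t := {x ∈ t | ¬ x < k}) (by omega)
    simp only [mem_filter, not_lt] at hbt hbs
    exact ⟨b, hbt.1, fun h ↦ hbs ⟨h, hbt.2⟩, by omega⟩

lemma toColex_image_le_toColex_image_of_le {s : Finset ℕ} {f g : ℕ → ℕ} (hf : Set.InjOn f s)
    (hg : Set.InjOn g s) (hfg : ∀ x ∈ s, f x ≤ g x) :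
    toColex (s.image f) ≤ toColex (s.image g) := by
  rw [← geomSum_le_geomSum_iff_toColex_le_toColex le_rfl, sum_image hf, sum_image hg]
  exact sum_le_sum fun x hx ↦ Nat.pow_le_pow_right two_pos (hfg x hx)

lemma piShift_strictMono (i : ℕ) : StrictMono (piShift i) := by
  intro x y hxy
  simp only [piShift]
  split_ifs <;> omega

lemma piShift_mem_Inc1 (i : ℕ) : piShift i ∈ Inc1 :=
  ⟨piShift_strictMono i, fun j ↦ by simp only [piShift]; split_ifs <;> omega⟩

lemma piShift_ne (i x : ℕ) : piShift i x ≠ i := by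
  simp only [piShift]; split_ifs <;> omega

lemma exists_image_piShift_eq {v : Finset ℕ} {i : ℕ} (hi : i ∉ v) :
    ∃ w : Finset ℕ, w.image (piShift i) = v := by
  refine ⟨v.image fun x ↦ if x < i then x else x - 1, ?_⟩
  rw [image_image]
  refine (image_congr fun x hx ↦ ?_).trans image_id
  have : x ≠ i := fun h ↦ hi (h ▸ hx)
  simp only [Function.comp_apply, piShift, id]
  split_ifs <;> omega

lemma image_mem_colexInitSeg_succ {u w : Finset ℕ} {π : ℕ → ℕ} (hπ : π ∈ Inc1)
    (hw : w ∈ colexInitSeg u) : w.image π ∈ colexInitSeg (u.image (· + 1)) := by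
  obtain ⟨hcard, hle⟩ := mem_colexInitSeg.1 hw
  have hsucc : StrictMono (· + 1 : ℕ → ℕ) := fun _ _ h ↦ Nat.succ_lt_succ h
  refine mem_colexInitSeg.2 ⟨?_, ?_⟩
  · rw [card_image_of_injective _ hπ.1.injective, card_image_of_injective _ hsucc.injective, hcard]
  · calc toColex (w.image π)
        ≤ toColex (w.image (· + 1)) := toColex_image_le_toColex_image_of_le
          hπ.1.injective.injOn hsucc.injective.injOn fun j _ ↦ hπ.2 j
      _ ≤ toColex (u.image (· + 1)) := (Colex.toColex_image_le_toColex_image hsucc).2 hle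

lemma exists_piShift_of_mem_colexInitSeg_succ {u v : Finset ℕ}
    (hv : v ∈ colexInitSeg (u.image (· + 1))) :
    ∃ w ∈ colexInitSeg u, ∃ i, v = w.image (piShift i) := by
  obtain ⟨hcard, hle⟩ := mem_colexInitSeg.1 hv
  have hgap : ∃ n, n ∉ v := v.exists_nat_subset_range.imp fun n hn h ↦ by simpa using hn h
  set i := Nat.find hgap
  obtain ⟨w, hwv⟩ := exists_image_piShift_eq (Nat.find_spec hgap)
  have hinj := (piShift_strictMono i).injective
  have hsucc : Function.Injective (· + 1 : ℕ → ℕ) := add_left_injective 1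
  have hwcard : #w = #u := by
    rw [← card_image_of_injective w hinj, hwv, hcard, card_image_of_injective _ hsucc]
  refine ⟨w, mem_colexInitSeg.2 ⟨hwcard, ?_⟩, i, hwv.symm⟩
  rw [← Colex.toColex_image_le_toColex_image (piShift_strictMono i), hwv]
  refine toColex_le_of_filter_le (k := i + 1) ?_ ?_ ?_
  · rw [hcard, card_image_of_injective _ hinj, card_image_of_injective _ hsucc]
  · intro x hx
    obtain ⟨hxu, hxi⟩ := mem_filter.1 hx
    obtain ⟨y, -, rfl⟩ := mem_image.1 hxu
    have hlt : piShift i y < i := (Nat.lt_succ_iff.1 hxi).lt_of_ne (piShift_ne i y)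
    exact mem_filter.2 ⟨not_not.1 (Nat.find_min hgap hlt), hxi⟩
  · have hhigh :
        {x ∈ u.image (piShift i) | i + 1 ≤ x} = {x ∈ u.image (· + 1) | i + 1 ≤ x} := by
      ext x
      simp only [mem_filter, mem_image, piShift]
      constructor <;> rintro ⟨⟨y, hy, rfl⟩, hx⟩ <;> refine ⟨⟨y, hy, ?_⟩, hx⟩ <;>
        split_ifs at * <;> omega
    rw [hhigh]
    exact toColex_filter_le_filter _ hle

lemma incF_colexInitSeg (u : Finset ℕ) :
    incF (colexInitSeg u) = (colexInitSeg (u.image (· + 1)) : Set (Finset ℕ)) := by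
  ext v
  constructor
  · rintro ⟨w, hw, π, hπ, rfl⟩
    exact image_mem_colexInitSeg_succ hπ hw
  · intro hv
    obtain ⟨w, hw, i, rfl⟩ := exists_piShift_of_mem_colexInitSeg_succ hv
    exact ⟨w, hw, piShift i, piShift_mem_Inc1 i, rfl⟩

lemma IsCompressedIn.exists_eq_colexInitSeg {d : ℕ} {F : Set (Finset ℕ)}
    (hF : IsCompressedIn Set.univ d F) (hpos : 0 < F.ncard) :
    ∃ u : Finset ℕ, #u = d ∧ F = colexInitSeg u := by
  obtain ⟨u, hu, hmax⟩ := Set.exists_max_image F toColex (Set.finite_of_ncard_pos hpos)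
    (Set.nonempty_of_ncard_ne_zero hpos.ne')
  have hud := (hF.1 u hu).2
  refine ⟨u, hud, Set.ext fun w ↦ ⟨fun hw ↦ ?_, fun hw ↦ ?_⟩⟩
  · exact mem_colexInitSeg.2 ⟨(hF.1 w hw).2.trans hud.symm, hmax w hw⟩
  · obtain ⟨hcard, hle⟩ := mem_colexInitSeg.1 hw
    exact hF.2 u hu w (Set.subset_univ _) (hcard.trans hud) hle

/-- The `d`-set in colex position `∑ i ∈ Icc s d, (a i).choose i`: the `s` largest numbers below
`a s`, together with `a (s + 1), …, a d`. -/
def binRepSet (s d : ℕ) (a : ℕ → ℕ) : Finset ℕ :=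
  Ico (a s - s) (a s) ∪ (Ioc s d).image a

section binRepSet

variable {s d : ℕ} {a : ℕ → ℕ}

lemma binRepSet_self : binRepSet s s a = Ico (a s - s) (a s) := by
  simp [binRepSet]

lemma binRepSet_add_one (hsd : s ≤ d) :
    binRepSet s (d + 1) a = insert (a (d + 1)) (binRepSet s d a) := by
  rw [binRepSet, binRepSet, ← insert_Ioc_right_eq_Ioc_add_one hsd, image_insert, union_insert]

lemma le_of_mem_binRepSet (hsd : s ≤ d) (ha : MonotoneOn a (Set.Icc s d)) :
    ∀ x ∈ binRepSet s d a, x ≤ a d := by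
  intro x hx
  rcases mem_union.1 hx with hx | hx
  · exact ((mem_Ico.1 hx).2.trans_le (ha ⟨le_rfl, hsd⟩ ⟨hsd, le_rfl⟩ hsd)).le
  · obtain ⟨i, hi, rfl⟩ := mem_image.1 hx
    obtain ⟨hsi, hid⟩ := mem_Ioc.1 hi
    exact ha ⟨hsi.le, hid⟩ ⟨hsd, le_rfl⟩ hid

lemma card_binRepSet (hsd : s ≤ d) (ha : StrictMonoOn a (Set.Icc s d)) (has : s ≤ a s) :
    #(binRepSet s d a) = d := by
  induction d, hsd using Nat.le_induction with
  | base => rw [binRepSet_self, Nat.card_Ico, Nat.sub_sub_self has]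
  | succ d hsd ih =>
    have ha' := ha.mono (Set.Icc_subset_Icc_right d.le_succ)
    have hlt : a d < a (d + 1) := ha ⟨hsd, d.le_succ⟩ ⟨hsd.trans d.le_succ, le_rfl⟩ d.lt_succ_self
    have hnot : a (d + 1) ∉ binRepSet s d a := fun h ↦
      (le_of_mem_binRepSet hsd ha'.monotoneOn _ h).not_gt hlt
    rw [binRepSet_add_one hsd, card_insert_of_notMem hnot, ih ha']

lemma card_colexInitSeg_binRepSet (hsd : s ≤ d) (ha : StrictMonoOn a (Set.Icc s d))
    (has : s ≤ a s) :
    #(colexInitSeg (binRepSet s d a)) = ∑ i ∈ Icc s d, (a i).choose i := by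
  induction d, hsd using Nat.le_induction with
  | base =>
    rw [binRepSet_self, Icc_self, sum_singleton]
    simpa [Nat.sub_add_cancel has] using card_colexInitSeg_Ico (a s - s) s
  | succ d hsd ih =>
    have ha' := ha.mono (Set.Icc_subset_Icc_right d.le_succ)
    have hlt : a d < a (d + 1) := ha ⟨hsd, d.le_succ⟩ ⟨hsd.trans d.le_succ, le_rfl⟩ d.lt_succ_self
    rw [binRepSet_add_one hsd, card_colexInitSeg_insert
      fun x hx ↦ (le_of_mem_binRepSet hsd ha'.monotoneOn x hx).trans_lt hlt,
      card_binRepSet hsd ha' has, ih ha', sum_Icc_succ_top (hsd.trans d.le_succ), add_comm]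

lemma image_binRepSet (has : s ≤ a s) :
    (binRepSet s d a).image (· + 1) = binRepSet s d (a · + 1) := by
  rw [binRepSet, binRepSet, image_union, image_add_right_Ico, image_image, Nat.sub_add_comm has]
  rfl

end binRepSet

theorem stmt14_general (d : ℕ) (F : Set (Finset ℕ)) (hcomp : IsCompressedIn Set.univ d F)
    (s : ℕ) (a : ℕ → ℕ) (hrep : IsBinRep d F.ncard s a) :
    (incF F).ncard = ∑ i ∈ Finset.Icc s d, Nat.choose (a i + 1) i := by
  obtain ⟨-, hsd, hsucc, has, hm⟩ := hrep
  have ha : StrictMonoOn a (Set.Icc s d) :=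
    strictMonoOn_of_lt_add_one Set.ordConnected_Icc fun i _ hi hi' ↦ hsucc i hi.1 hi'.2
  have hcount : F.ncard = #(colexInitSeg (binRepSet s d a)) := by
    rw [hm, card_colexInitSeg_binRepSet hsd ha has]
  obtain ⟨u, hud, rfl⟩ := hcomp.exists_eq_colexInitSeg
    (hcount ▸ card_pos.2 ⟨_, self_mem_colexInitSeg _⟩)
  rw [Set.ncard_coe_finset] at hcount
  obtain rfl : u = binRepSet s d a :=
    eq_of_card_colexInitSeg_eq (hud.trans (card_binRepSet hsd ha has).symm) hcount
  rw [incF_colexInitSeg, Set.ncard_coe_finset, image_binRepSet has,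
    card_colexInitSeg_binRepSet hsd (fun i hi j hj hij ↦ Nat.succ_lt_succ (ha hi hj hij))
      (has.trans (a s).le_succ)]

theorem stmt14 (d : ℕ) (hd : 1 ≤ d) (F : Set (Finset ℕ)) (hFfin : F.Finite)
    (hFd : ∀ u ∈ F, u.card = d) (hcomp : IsCompressedIn Set.univ d F)
    (s : ℕ) (a : ℕ → ℕ) (hrep : IsBinRep d F.ncard s a) :
    (incF F).ncard = ∑ i ∈ Finset.Icc s d, Nat.choose (a i + 1) i :=
  stmt14_general d F hcomp s a hrep
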